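/- arXiv:2110.09735 — 3 statements merged into one kernel-verified Lean document; each statement's English description precedes it below -/
import Mathlib

section
/- Let l > 0 be a natural number with l < 2^n, let j₀ = max{j : the j-th bit of l is 1}, and let b < 2^n. If b ⊕ l > b, then (b ⊕ 2^{j₀}) ⊕ l < b ⊕ 2^{j₀}. -/
theorem xor_msb_flip_lt {n l b j₀ : ℕ} (hl : 0 < l) (hln : l < 2^n) (hb : b < 2^n)
    (hj₀ : l.testBit j₀ = true) (hmax : ∀ j, l.testBit j = true → j ≤ j₀)
    (h : b < b ^^^ l) :
    (b ^^^ 2^j₀) ^^^ l < b ^^^ 2^j₀ := by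
  have hlhigh : ∀ j, j₀ < j → l.testBit j = false := by
    intro j hj
    by_contra hc
    have := hmax j (by simpa using hc)
    omega
  have hb0 : b.testBit j₀ = false := by
    by_contra hc
    have hbt : b.testBit j₀ = true := by simpa using hc
    have : b ^^^ l < b := by
      apply Nat.lt_of_testBit j₀
      · simp [Nat.testBit_xor, hbt, hj₀]
      · exact hbt
      · intro j hj
        simp [Nat.testBit_xor, hlhigh j hj]
    omega
  apply Nat.lt_of_testBit j₀
  · simp [Nat.testBit_xor, hb0, hj₀, Nat.testBit_two_pow_self]
  · simp [Nat.testBit_xor, hb0, Nat.testBit_two_pow_self]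
  · intro j hj
    have : Nat.testBit (2^j₀) j = false := Nat.testBit_two_pow_of_ne (by omega)
    simp [Nat.testBit_xor, hlhigh j hj, this]
end

section
/- Let A ∈ ℂ^{2^n × 2^n} be a band matrix with bandwidth k ≥ 1, i.e. A_{ij} = 0 whenever |i − j| > k. Then the number of distinct values of b ⊕ c over pairs (b,c) with A_{bc} ≠ 0 is at most (n − r)·k + 2^r, where r = ⌈log₂ k⌉. -/
/-!
If the leading bit of `b ^^^ c` is bit `h`, then `b` and `c` agree above bit `h` and differ at
it, so `b ^^^ c + |b - c| ≥ 2 ^ (h + 1)`. Hence, when `|b - c| ≤ k`, the value `b ^^^ c` is either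
below `2 ^ r` or lies in one of the windows `[2 ^ (h + 1) - k, 2 ^ (h + 1))` with `r ≤ h < n`;
there are `n - r` such windows of at most `k` values each.
-/

open Finset

theorem Nat.two_pow_succ_le_xor_add_dist {h b c : ℕ} (hlo : 2 ^ h ≤ b ^^^ c)
    (hhi : b ^^^ c < 2 ^ (h + 1)) : 2 ^ (h + 1) ≤ (b ^^^ c) + b.dist c := by
  induction h generalizing b c with
  | zero =>
    have hbc : b ≠ c := by rw [ne_eq, ← Nat.xor_eq_zero_iff]; omega
    unfold Nat.dist
    omega
  | succ h ih =>
    have hdiv : (b ^^^ c) / 2 = b / 2 ^^^ c / 2 := Nat.xor_div_two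
    have hmod : (b ^^^ c) % 2 = (b + c) % 2 := Nat.xor_mod_two_eq
    have hhalf := @ih (b / 2) (c / 2) (by rw [← hdiv, pow_succ] at *; omega)
      (by rw [← hdiv, pow_succ] at *; omega)
    unfold Nat.dist at *
    rw [pow_succ] at *
    omega

def xorWindows (n k r : ℕ) : Finset ℕ :=
  range (2 ^ r) ∪ (Ico r n).biUnion fun h => Ico (2 ^ (h + 1) - k) (2 ^ (h + 1))

theorem xor_mem_xorWindows {n k r b c : ℕ} (hb : b < 2 ^ n) (hc : c < 2 ^ n)
    (hbc : b.dist c ≤ k) : b ^^^ c ∈ xorWindows n k r := by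
  unfold xorWindows
  rcases lt_or_ge (b ^^^ c) (2 ^ r) with hsmall | hlarge
  · exact mem_union_left _ (mem_range.mpr hsmall)
  have hne : b ^^^ c ≠ 0 := (Nat.two_pow_pos r).trans_le hlarge |>.ne'
  set h := Nat.log 2 (b ^^^ c)
  have hlo : 2 ^ h ≤ b ^^^ c := Nat.pow_log_le_self 2 hne
  have hhi : b ^^^ c < 2 ^ (h + 1) := Nat.lt_pow_succ_log_self one_lt_two _
  have hrh : r ≤ h := (Nat.le_log_iff_pow_le one_lt_two hne).mpr hlarge
  have hhn : h < n := (Nat.pow_lt_pow_iff_right one_lt_two).mp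
    (hlo.trans_lt (Nat.xor_lt_two_pow hb hc))
  have hwindow := Nat.two_pow_succ_le_xor_add_dist hlo hhi
  exact mem_union_right _ <| mem_biUnion.mpr
    ⟨h, mem_Ico.mpr ⟨hrh, hhn⟩, mem_Ico.mpr ⟨by omega, hhi⟩⟩

theorem card_xorWindows_le (n k r : ℕ) : #(xorWindows n k r) ≤ (n - r) * k + 2 ^ r := by
  have hwindows : #((Ico r n).biUnion fun h => Ico (2 ^ (h + 1) - k) (2 ^ (h + 1)))
      ≤ (n - r) * k := by
    calc _ ≤ ∑ h ∈ Ico r n, #(Ico (2 ^ (h + 1) - k) (2 ^ (h + 1))) := card_biUnion_le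
      _ ≤ ∑ _h ∈ Ico r n, k := sum_le_sum fun h _ => by rw [Nat.card_Ico]; omega
      _ = (n - r) * k := by rw [sum_const, Nat.card_Ico, smul_eq_mul]
  calc _ ≤ #(range (2 ^ r)) + _ := card_union_le _ _
    _ ≤ 2 ^ r + (n - r) * k := by rw [card_range]; omega
    _ = (n - r) * k + 2 ^ r := add_comm _ _

theorem band_matrix_xor_classes_general {n k : ℕ}
    (A : Matrix (Fin (2^n)) (Fin (2^n)) ℂ)
    (hband : ∀ i j : Fin (2^n), (k : ℤ) < |(i : ℤ) - (j : ℤ)| → A i j = 0) :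
    (Finset.image (fun p : Fin (2^n) × Fin (2^n) => (p.1 : ℕ) ^^^ (p.2 : ℕ))
        (Finset.univ.filter fun p => A p.1 p.2 ≠ 0)).card
      ≤ (n - Nat.clog 2 k) * k + 2 ^ (Nat.clog 2 k) := by
  refine (card_le_card ?_).trans (card_xorWindows_le n k (Nat.clog 2 k))
  simp only [subset_iff, mem_image, mem_filter, mem_univ, true_and]
  rintro _ ⟨⟨i, j⟩, hij, rfl⟩
  have hdist : (i : ℕ).dist j ≤ k := by
    by_contra hfar
    exact hij <| hband i j <| by unfold Nat.dist at hfar; rw [lt_abs]; omega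
  exact xor_mem_xorWindows i.isLt j.isLt hdist

theorem band_matrix_xor_classes {n k : ℕ} (hk : 1 ≤ k)
    (A : Matrix (Fin (2^n)) (Fin (2^n)) ℂ)
    (hband : ∀ i j : Fin (2^n), (k : ℤ) < |(i : ℤ) - (j : ℤ)| → A i j = 0) :
    (Finset.image (fun p : Fin (2^n) × Fin (2^n) => (p.1 : ℕ) ^^^ (p.2 : ℕ))
        (Finset.univ.filter fun p => A p.1 p.2 ≠ 0)).card
      ≤ (n - Nat.clog 2 k) * k + 2 ^ (Nat.clog 2 k) :=
  band_matrix_xor_classes_general A hband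
end

section
/- The number of distinct values of b ⊕ c over all pairs b, c ∈ {0,…,2^n−1} with |b − c| ≤ 1 (tridiagonal support) is exactly n + 1. -/
private lemma xor_two_mul_add_one (a b : ℕ) : (2*a) ^^^ (2*b+1) = 2*(a ^^^ b) + 1 := by
  simpa [Nat.bit, two_mul, Nat.add_comm, Nat.mul_comm] using Nat.xor_bit false a true b

private lemma xor_add_one_two_mul (a b : ℕ) : (2*a+1) ^^^ (2*b) = 2*(a ^^^ b) + 1 := by
  simpa [Nat.bit, two_mul, Nat.add_comm, Nat.mul_comm] using Nat.xor_bit true a false b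

private lemma xor_succ_eq (b : ℕ) : ∃ k, b ^^^ (b+1) = 2^(k+1) - 1 := by
  induction b using Nat.strong_induction_on with
  | _ b ih =>
    rcases Nat.even_or_odd b with ⟨m, hm⟩ | ⟨m, hm⟩
    · refine ⟨0, ?_⟩
      subst hm
      rw [show m + m = 2*m by ring, xor_two_mul_add_one]
      simp
    · subst hm
      obtain ⟨k, hk⟩ := ih m (by omega)
      refine ⟨k+1, ?_⟩
      rw [show 2*m+1+1 = 2*(m+1) by ring, xor_add_one_two_mul, hk]
      have : 1 ≤ 2^(k+1) := Nat.one_le_two_pow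
      rw [pow_succ]
      omega

private lemma xor_pow_sub_one (m : ℕ) : (2^m - 1) ^^^ 2^m = 2^(m+1) - 1 := by
  induction m with
  | zero => decide
  | succ m ih =>
    have h1 : 1 ≤ 2^m := Nat.one_le_two_pow
    rw [show 2^(m+1) - 1 = 2*(2^m - 1) + 1 by rw [pow_succ]; omega,
      show (2:ℕ)^(m+1) = 2*2^m by rw [pow_succ]; ring,
      xor_add_one_two_mul, ih, pow_succ, pow_succ]
    omega

theorem tridiagonal_xor_classes (n : ℕ) :
    (Finset.image (fun p : Fin (2^n) × Fin (2^n) => (p.1 : ℕ) ^^^ (p.2 : ℕ))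
        (Finset.univ.filter fun p : Fin (2^n) × Fin (2^n) =>
          |(p.1 : ℤ) - (p.2 : ℤ)| ≤ 1)).card = n + 1 := by
  have key : (Finset.image (fun p : Fin (2^n) × Fin (2^n) => (p.1 : ℕ) ^^^ (p.2 : ℕ))
        (Finset.univ.filter fun p : Fin (2^n) × Fin (2^n) =>
          |(p.1 : ℤ) - (p.2 : ℤ)| ≤ 1))
      = (Finset.range (n+1)).image (fun k => 2^k - 1) := by
    ext x
    simp only [Finset.mem_image, Finset.mem_filter, Finset.mem_univ, true_and,
      Finset.mem_range]
    constructor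
    · rintro ⟨⟨b, c⟩, habs, rfl⟩
      simp only at habs ⊢
      have hb := b.isLt; have hc := c.isLt
      have hcases : (b:ℕ) = c ∨ (c:ℕ) = b + 1 ∨ (b:ℕ) = c + 1 := by
        rw [abs_le] at habs; omega
      have main : ∀ (u v : ℕ), v = u + 1 → v < 2^n →
          ∃ k < n + 1, 2^k - 1 = u ^^^ v := by
        intro u v huv hv
        subst huv
        obtain ⟨k, hk⟩ := xor_succ_eq u
        have h3 : u ^^^ (u+1) < 2^n := Nat.xor_lt_two_pow (by omega) hv
        have h4 : 2^(k+1) ≤ 2^n := by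
          have : 1 ≤ 2^(k+1) := Nat.one_le_two_pow
          omega
        have h5 : k+1 ≤ n := (Nat.pow_le_pow_iff_right (by norm_num)).mp h4
        exact ⟨k+1, by omega, hk.symm⟩
      rcases hcases with h | h | h
      · exact ⟨0, by omega, by simp [show (b:ℕ) = c from h]⟩
      · exact main b c h hc
      · obtain ⟨k, hk, he⟩ := main c b h hb
        exact ⟨k, hk, by rw [he, Nat.xor_comm]⟩
    · rintro ⟨k, hk, rfl⟩
      rcases Nat.eq_zero_or_pos k with rfl | hkpos
      · exact ⟨⟨0, 0⟩, by simp⟩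
      · have h1 : 2^(k-1) < 2^n := Nat.pow_lt_pow_right (by norm_num) (by omega)
        have h2 : 1 ≤ 2^(k-1) := Nat.one_le_two_pow
        refine ⟨⟨⟨2^(k-1) - 1, by omega⟩, ⟨2^(k-1), h1⟩⟩, ?_, ?_⟩
        · simp only [Fin.val_mk]
          rw [abs_le]
          push_cast [h2]
          constructor <;> omega
        · simp only [Fin.val_mk]
          have := xor_pow_sub_one (k-1)
          rw [this, show k - 1 + 1 = k by omega]
  rw [key, Finset.card_image_of_injective _ ?_, Finset.card_range]
  intro a b hab
  simp only at hab
  have ha : 1 ≤ 2^a := Nat.one_le_two_pow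
  have hb : 1 ≤ 2^b := Nat.one_le_two_pow
  have : (2:ℕ)^a = 2^b := by omega
  exact Nat.pow_right_injective (by norm_num) this
end
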